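/- Let x : ℝ → ℝⁿ be a solution of the linear ODE ẋ(t) = A x(t) + B u₀ with constant input u₀ on [0, δ]. Then for any positive semidefinite matrices Q and R, ∫₀^δ (x(ξ)ᵀ Q x(ξ) + u₀ᵀ R u₀) dξ = [x(0); u₀]ᵀ Γ(δ) [x(0); u₀], where Γ(δ) is the block matrix with blocks ∫₀^δ A_sᵀ Q A_s ds, ∫₀^δ A_sᵀ Q B_s ds, ∫₀^δ B_sᵀ Q A_s ds, and ∫₀^δ (B_sᵀ Q B_s + R) ds, with A_s = e^{A s} and B_s = (∫₀^s e^{Aτ} dτ) B. -/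

import Mathlib

/-!
On `[0, δ]` the trajectory is `x(s) = A_s x(0) + B_s u₀`: the right-hand side solves the same
Lipschitz ODE with the same initial value, because `A ∫₀^s e^{Aτ} dτ = e^{As} - 1` gives
`A B_s = A_s B - B`. Substituting it, the integrand becomes the quadratic form at `[x(0); u₀]` of
the block matrix whose integral over `[0, δ]` is `Γ(δ)`, and a quadratic form commutes with
the integral.
-/

open Matrix MeasureTheory intervalIntegral

attribute [local instance] Matrix.normedAddCommGroup Matrix.normedSpace

/-- `A_s = e^{As}`. -/
noncomputable def Aexp {n : ℕ} (A : Matrix (Fin n) (Fin n) ℝ) (s : ℝ) :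
    Matrix (Fin n) (Fin n) ℝ := NormedSpace.exp (s • A)

/-- `B_s = (∫₀^s e^{Aτ} dτ) B`. -/
noncomputable def Bexp {n m : ℕ} (A : Matrix (Fin n) (Fin n) ℝ)
    (B : Matrix (Fin n) (Fin m) ℝ) (s : ℝ) : Matrix (Fin n) (Fin m) ℝ :=
  (∫ τ in (0:ℝ)..s, Aexp A τ) * B

/-- The block matrix `Γ(δ)` of the stage-cost quadratic form. -/
noncomputable def Gam {n m : ℕ} (A : Matrix (Fin n) (Fin n) ℝ)
    (B : Matrix (Fin n) (Fin m) ℝ) (Q : Matrix (Fin n) (Fin n) ℝ)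
    (R : Matrix (Fin m) (Fin m) ℝ) (δ : ℝ) :
    Matrix (Fin n ⊕ Fin m) (Fin n ⊕ Fin m) ℝ :=
  Matrix.fromBlocks
    (∫ s in (0:ℝ)..δ, (Aexp A s)ᵀ * Q * Aexp A s)
    (∫ s in (0:ℝ)..δ, (Aexp A s)ᵀ * Q * Bexp A B s)
    (∫ s in (0:ℝ)..δ, (Bexp A B s)ᵀ * Q * Aexp A s)
    (∫ s in (0:ℝ)..δ, ((Bexp A B s)ᵀ * Q * Bexp A B s + R))

section

-- Differentiating `NormedSpace.exp` needs a normed algebra structure, which the sup norm of the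
-- ambient instance is not; matrix entries do not see which norm was used.
attribute [local instance 2000] Matrix.linftyOpNormedAddCommGroup Matrix.linftyOpNormedSpace
  Matrix.linftyOpNormedRing Matrix.linftyOpNormedAlgebra

theorem Matrix.hasDerivAt_exp_smul_const_apply {ι : Type*} [Fintype ι] [DecidableEq ι]
    (A : Matrix ι ι ℝ) (t : ℝ) (i j : ι) :
    HasDerivAt (fun s : ℝ => NormedSpace.exp (s • A) i j)
      ((A * NormedSpace.exp (t • A)) i j) t := by
  have h := hasDerivAt_exp_smul_const' (𝕂 := ℝ) A t
  let L : Matrix ι ι ℝ →L[ℝ] ℝ :=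
    ⟨(LinearMap.proj (R := ℝ) (φ := fun _ : ι => ℝ) j).comp
      (LinearMap.proj (R := ℝ) (φ := fun _ : ι => ι → ℝ) i),
      (continuous_apply j).comp (continuous_apply i)⟩
  exact L.hasFDerivAt.comp_hasDerivAt t h

end

section

variable {ι κ μ : Type*} [Fintype ι] [Fintype κ]

theorem HasDerivAt.matrix_mulVec_const {M : ℝ → Matrix ι κ ℝ} {M' : Matrix ι κ ℝ} {t : ℝ}
    (h : HasDerivAt M M' t) (v : κ → ℝ) : HasDerivAt (fun s => M s *ᵥ v) (M' *ᵥ v) t :=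
  let L : Matrix ι κ ℝ →ₗ[ℝ] ι → ℝ :=
    { toFun := (· *ᵥ v), map_add' := (add_mulVec · · v), map_smul' := (smul_mulVec · · v) }
  L.toContinuousLinearMap.hasFDerivAt.comp_hasDerivAt t h

theorem HasDerivAt.matrix_mul_const [Fintype μ] {M : ℝ → Matrix ι κ ℝ} {M' : Matrix ι κ ℝ} {t : ℝ}
    (h : HasDerivAt M M' t) (N : Matrix κ μ ℝ) : HasDerivAt (fun s => M s * N) (M' * N) t :=
  (mulRightLinearMap ι ℝ N).toContinuousLinearMap.hasFDerivAt.comp_hasDerivAt t h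

theorem Matrix.dotProduct_intervalIntegral_mulVec {F : ℝ → Matrix ι κ ℝ} (hF : Continuous F)
    (a b : ℝ) (v : ι → ℝ) (w : κ → ℝ) :
    v ⬝ᵥ (∫ s in a..b, F s) *ᵥ w = ∫ s in a..b, v ⬝ᵥ F s *ᵥ w :=
  let L : Matrix ι κ ℝ →ₗ[ℝ] ℝ :=
    { toFun := fun M => v ⬝ᵥ M *ᵥ w
      map_add' := fun M N => by rw [add_mulVec, dotProduct_add]
      map_smul' := fun c M => by rw [smul_mulVec, dotProduct_smul]; rfl }
  (L.toContinuousLinearMap.intervalIntegral_comp_comm (hF.intervalIntegrable a b)).symm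

theorem Matrix.intervalIntegral_apply {F : ℝ → Matrix ι κ ℝ} (hF : Continuous F) (a b : ℝ)
    (i : ι) (j : κ) : (∫ s in a..b, F s) i j = ∫ s in a..b, F s i j :=
  ((entryLinearMap ℝ ℝ i j).toContinuousLinearMap.intervalIntegral_comp_comm
    (hF.intervalIntegrable a b)).symm

theorem Matrix.intervalIntegral_fromBlocks {l o : Type*} [Fintype l] [Fintype o]
    {F₁₁ : ℝ → Matrix ι κ ℝ} {F₁₂ : ℝ → Matrix ι o ℝ} {F₂₁ : ℝ → Matrix l κ ℝ}
    {F₂₂ : ℝ → Matrix l o ℝ}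
    (hF : Continuous fun s => fromBlocks (F₁₁ s) (F₁₂ s) (F₂₁ s) (F₂₂ s)) (a b : ℝ) :
    ∫ s in a..b, fromBlocks (F₁₁ s) (F₁₂ s) (F₂₁ s) (F₂₂ s) =
      fromBlocks (∫ s in a..b, F₁₁ s) (∫ s in a..b, F₁₂ s) (∫ s in a..b, F₂₁ s)
        (∫ s in a..b, F₂₂ s) := by
  have h₁₁ : Continuous F₁₁ := (hF.matrix_submatrix Sum.inl Sum.inl).congr fun s =>
    toBlocks_fromBlocks₁₁ (F₁₁ s) (F₁₂ s) (F₂₁ s) (F₂₂ s)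
  have h₁₂ : Continuous F₁₂ := (hF.matrix_submatrix Sum.inl Sum.inr).congr fun s =>
    toBlocks_fromBlocks₁₂ (F₁₁ s) (F₁₂ s) (F₂₁ s) (F₂₂ s)
  have h₂₁ : Continuous F₂₁ := (hF.matrix_submatrix Sum.inr Sum.inl).congr fun s =>
    toBlocks_fromBlocks₂₁ (F₁₁ s) (F₁₂ s) (F₂₁ s) (F₂₂ s)
  have h₂₂ : Continuous F₂₂ := (hF.matrix_submatrix Sum.inr Sum.inr).congr fun s =>
    toBlocks_fromBlocks₂₂ (F₁₁ s) (F₁₂ s) (F₂₁ s) (F₂₂ s)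
  ext (i | i) (j | j) <;>
    simp only [intervalIntegral_apply hF, fromBlocks_apply₁₁, fromBlocks_apply₁₂,
      fromBlocks_apply₂₁, fromBlocks_apply₂₂, intervalIntegral_apply h₁₁,
      intervalIntegral_apply h₁₂, intervalIntegral_apply h₂₁, intervalIntegral_apply h₂₂]

theorem Matrix.dotProduct_transpose_mul_mul_mulVec {α l k k' : Type*} [CommSemiring α]
    [Fintype l] [Fintype k] [Fintype k'] (X : Matrix l k α) (Q : Matrix l l α)
    (Y : Matrix l k' α) (v : k → α) (w : k' → α) :
    v ⬝ᵥ (Xᵀ * Q * Y) *ᵥ w = (X *ᵥ v) ⬝ᵥ Q *ᵥ (Y *ᵥ w) := by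
  rw [Matrix.mul_assoc, ← mulVec_mulVec, dotProduct_mulVec, vecMul_transpose, mulVec_mulVec]

theorem Matrix.sumElim_dotProduct_fromBlocks_mulVec_sumElim {α l : Type*} [CommSemiring α]
    [Fintype l] (M : Matrix l ι α) (N : Matrix l κ α) (Q : Matrix l l α)
    (R : Matrix κ κ α) (a : ι → α) (u : κ → α) :
    Sum.elim a u ⬝ᵥ fromBlocks (Mᵀ * Q * M) (Mᵀ * Q * N) (Nᵀ * Q * M) (Nᵀ * Q * N + R) *ᵥ
        Sum.elim a u =
      (M *ᵥ a + N *ᵥ u) ⬝ᵥ Q *ᵥ (M *ᵥ a + N *ᵥ u) + u ⬝ᵥ R *ᵥ u := by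
  simp only [fromBlocks_mulVec, sumElim_dotProduct_sumElim, Sum.elim_comp_inl, Sum.elim_comp_inr,
    add_mulVec, dotProduct_add, add_dotProduct, mulVec_add, dotProduct_transpose_mul_mul_mulVec]
  ring

theorem Continuous.matrix_transpose_mul_mul {X l k k' : Type*} [TopologicalSpace X] [Fintype l]
    {M : X → Matrix l k ℝ} {N : X → Matrix l k' ℝ} (hM : Continuous M) (Q : Matrix l l ℝ)
    (hN : Continuous N) : Continuous fun s => (M s)ᵀ * Q * N s :=
  (hM.matrix_transpose.matrix_mul continuous_const).matrix_mul hN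

end

section ConstantInputSolution

variable {n m : ℕ} (A : Matrix (Fin n) (Fin n) ℝ) (B : Matrix (Fin n) (Fin m) ℝ)

theorem hasDerivAt_Aexp (s : ℝ) : HasDerivAt (Aexp A) (A * Aexp A s) s :=
  hasDerivAt_pi.2 fun i => hasDerivAt_pi.2 fun j => A.hasDerivAt_exp_smul_const_apply s i j

theorem continuous_Aexp : Continuous (Aexp A) :=
  continuous_iff_continuousAt.2 fun s => (hasDerivAt_Aexp A s).continuousAt

theorem Aexp_zero : Aexp A 0 = 1 := by
  rw [Aexp, zero_smul, NormedSpace.exp_zero]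

theorem mul_integral_Aexp (s : ℝ) : A * (∫ τ in (0:ℝ)..s, Aexp A τ) = Aexp A s - 1 := by
  have hA : Continuous fun τ => A * Aexp A τ := continuous_const.matrix_mul (continuous_Aexp A)
  calc A * (∫ τ in (0:ℝ)..s, Aexp A τ) = ∫ τ in (0:ℝ)..s, A * Aexp A τ :=
        ((mulLeftLinearMap (Fin n) ℝ A).toContinuousLinearMap.intervalIntegral_comp_comm
          ((continuous_Aexp A).intervalIntegrable 0 s)).symm
    _ = Aexp A s - 1 := by
        rw [integral_eq_sub_of_hasDerivAt (fun τ _ => hasDerivAt_Aexp A τ)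
          (hA.intervalIntegrable 0 s), Aexp_zero]

theorem hasDerivAt_Bexp (s : ℝ) : HasDerivAt (Bexp A B) (Aexp A s * B) s :=
  ((continuous_Aexp A).integral_hasStrictDerivAt 0 s).hasDerivAt.matrix_mul_const B

theorem continuous_Bexp : Continuous (Bexp A B) :=
  continuous_iff_continuousAt.2 fun s => (hasDerivAt_Bexp A B s).continuousAt

theorem Bexp_zero : Bexp A B 0 = 0 := by
  rw [Bexp, integral_same, Matrix.zero_mul]

theorem mul_Bexp (s : ℝ) : A * Bexp A B s = Aexp A s * B - B := by
  rw [Bexp, ← Matrix.mul_assoc, mul_integral_Aexp, Matrix.sub_mul, Matrix.one_mul]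

theorem hasDerivAt_Aexp_mulVec_add_Bexp_mulVec (a : Fin n → ℝ) (u : Fin m → ℝ) (s : ℝ) :
    HasDerivAt (fun t => Aexp A t *ᵥ a + Bexp A B t *ᵥ u)
      (A *ᵥ (Aexp A s *ᵥ a + Bexp A B s *ᵥ u) + B *ᵥ u) s := by
  refine (((hasDerivAt_Aexp A s).matrix_mulVec_const a).add
    ((hasDerivAt_Bexp A B s).matrix_mulVec_const u)).congr_deriv ?_
  rw [mulVec_add, mulVec_mulVec, mulVec_mulVec, mul_Bexp, sub_mulVec]
  abel

theorem eqOn_Aexp_mulVec_add_Bexp_mulVec {u : Fin m → ℝ} {x : ℝ → Fin n → ℝ} {δ : ℝ}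
    (hx : ∀ t ∈ Set.Icc 0 δ, HasDerivAt x (A *ᵥ x t + B *ᵥ u) t) :
    Set.EqOn x (fun t => Aexp A t *ᵥ x 0 + Bexp A B t *ᵥ u) (Set.Icc 0 δ) := by
  have hlip : LipschitzWith ‖(mulVecLin A).toContinuousLinearMap‖₊ fun z => A *ᵥ z + B *ᵥ u :=
    fun z w => by
      rw [edist_add_right]
      exact (mulVecLin A).toContinuousLinearMap.lipschitz z w
  have hy := hasDerivAt_Aexp_mulVec_add_Bexp_mulVec A B (x 0) u
  refine ODE_solution_unique (v := fun _ z => A *ᵥ z + B *ᵥ u) (fun _ => hlip)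
    (fun t ht => (hx t ht).continuousAt.continuousWithinAt)
    (fun t ht => (hx t (Set.Ico_subset_Icc_self ht)).hasDerivWithinAt)
    (fun t _ => (hy t).continuousAt.continuousWithinAt) (fun t _ => (hy t).hasDerivWithinAt) ?_
  simp [Aexp_zero, Bexp_zero]

end ConstantInputSolution

section StageCost

variable {n m : ℕ} (A : Matrix (Fin n) (Fin n) ℝ) (B : Matrix (Fin n) (Fin m) ℝ)
  (Q : Matrix (Fin n) (Fin n) ℝ) (R : Matrix (Fin m) (Fin m) ℝ)

noncomputable def GamIntegrand (s : ℝ) : Matrix (Fin n ⊕ Fin m) (Fin n ⊕ Fin m) ℝ :=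
  fromBlocks ((Aexp A s)ᵀ * Q * Aexp A s) ((Aexp A s)ᵀ * Q * Bexp A B s)
    ((Bexp A B s)ᵀ * Q * Aexp A s) ((Bexp A B s)ᵀ * Q * Bexp A B s + R)

theorem continuous_GamIntegrand : Continuous (GamIntegrand A B Q R) :=
  ((continuous_Aexp A).matrix_transpose_mul_mul Q (continuous_Aexp A)).matrix_fromBlocks
    ((continuous_Aexp A).matrix_transpose_mul_mul Q (continuous_Bexp A B))
    ((continuous_Bexp A B).matrix_transpose_mul_mul Q (continuous_Aexp A))
    (((continuous_Bexp A B).matrix_transpose_mul_mul Q (continuous_Bexp A B)).add continuous_const)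

theorem Gam_eq_integral_GamIntegrand (δ : ℝ) :
    Gam A B Q R δ = ∫ s in (0:ℝ)..δ, GamIntegrand A B Q R s :=
  (intervalIntegral_fromBlocks (continuous_GamIntegrand A B Q R) 0 δ).symm

end StageCost

theorem stmt1_general {n m : ℕ} (A : Matrix (Fin n) (Fin n) ℝ)
    (B : Matrix (Fin n) (Fin m) ℝ)
    (Q : Matrix (Fin n) (Fin n) ℝ) (R : Matrix (Fin m) (Fin m) ℝ)
    (δ : ℝ) (hδ : 0 ≤ δ) (u₀ : Fin m → ℝ) (x : ℝ → Fin n → ℝ)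
    (hode : ∀ t ∈ Set.Icc 0 δ,
      HasDerivAt x (A.mulVec (x t) + B.mulVec u₀) t) :
    (∫ ξ in (0:ℝ)..δ, (x ξ ⬝ᵥ Q.mulVec (x ξ) + u₀ ⬝ᵥ R.mulVec u₀)) =
      (Sum.elim (x 0) u₀) ⬝ᵥ (Gam A B Q R δ).mulVec (Sum.elim (x 0) u₀) := by
  have hx := eqOn_Aexp_mulVec_add_Bexp_mulVec A B hode
  calc ∫ ξ in (0:ℝ)..δ, (x ξ ⬝ᵥ Q *ᵥ x ξ + u₀ ⬝ᵥ R *ᵥ u₀)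
      = ∫ ξ in (0:ℝ)..δ, Sum.elim (x 0) u₀ ⬝ᵥ GamIntegrand A B Q R ξ *ᵥ Sum.elim (x 0) u₀ := by
        refine integral_congr fun ξ hξ => ?_
        rw [hx (Set.uIcc_of_le hδ ▸ hξ), GamIntegrand,
          sumElim_dotProduct_fromBlocks_mulVec_sumElim]
    _ = Sum.elim (x 0) u₀ ⬝ᵥ Gam A B Q R δ *ᵥ Sum.elim (x 0) u₀ := by
        rw [Gam_eq_integral_GamIntegrand,
          dotProduct_intervalIntegral_mulVec (continuous_GamIntegrand A B Q R)]

/-- Stage-cost identity: if `x` solves `ẋ = A x + B u₀` with constant input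
`u₀` on `[0, δ]`, then for positive semidefinite `Q`, `R`,
`∫₀^δ (x(ξ)ᵀ Q x(ξ) + u₀ᵀ R u₀) dξ = [x(0); u₀]ᵀ Γ(δ) [x(0); u₀]`. -/
theorem stmt1 {n m : ℕ} (A : Matrix (Fin n) (Fin n) ℝ)
    (B : Matrix (Fin n) (Fin m) ℝ)
    (Q : Matrix (Fin n) (Fin n) ℝ) (R : Matrix (Fin m) (Fin m) ℝ)
    (hQ : Q.PosSemidef) (hR : R.PosSemidef)
    (δ : ℝ) (hδ : 0 ≤ δ) (u₀ : Fin m → ℝ) (x : ℝ → Fin n → ℝ)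
    (hode : ∀ t ∈ Set.Icc 0 δ,
      HasDerivAt x (A.mulVec (x t) + B.mulVec u₀) t) :
    (∫ ξ in (0:ℝ)..δ, (x ξ ⬝ᵥ Q.mulVec (x ξ) + u₀ ⬝ᵥ R.mulVec u₀)) =
      (Sum.elim (x 0) u₀) ⬝ᵥ (Gam A B Q R δ).mulVec (Sum.elim (x 0) u₀) :=
  stmt1_general A B Q R δ hδ u₀ x hode
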